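/- Let f : ℝⁿ → ℝ have K-Lipschitz gradient, and let (x₀ᵗ), (x₁ᵗ), t = 0,…,T, be two sequences with x_iᵗ = x_iᵗ⁻¹ + α·sign(∇f(x_iᵗ⁻¹)) (same signed-gradient update rule). Then |f(x₁^T) − f(x₁⁰)| ≤ Σ_{t=1}^{T} [ α‖∇f(x₀ᵗ⁻¹)‖₁ + √n αK‖x₁ᵗ⁻¹ − x₀ᵗ⁻¹‖₂ + (K/2)α²n ]. -/

import Mathlib

/-!
A signed-gradient step `v = α • sign (∇f x)` satisfies `⟪∇f x, v⟫ = α ‖∇f x‖₁` and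
`‖v‖² ≤ n α²`, so the descent lemma for a `K`-Lipschitz gradient bounds `|f (x + v) - f x|` by
`α ‖∇f x‖₁ + (K / 2) n α²`. Replacing `‖∇f x₁ᵗ‖₁` by `‖∇f x₀ᵗ‖₁` costs at most
`√n ‖∇f x₁ᵗ - ∇f x₀ᵗ‖ ≤ √n K ‖x₁ᵗ - x₀ᵗ‖`, and the one-step bounds add up along the
telescoping sum `f (x₁ᵀ) - f (x₁⁰) = ∑ₜ (f (x₁ᵗ⁺¹) - f (x₁ᵗ))`.
-/

open Finset

theorem nonneg_of_norm_sub_le_mul_norm_sub {E F : Type*} [NormedAddCommGroup E] [Nontrivial E]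
    [SeminormedAddCommGroup F] {g : E → F} {K : ℝ}
    (h : ∀ u v, ‖g u - g v‖ ≤ K * ‖u - v‖) : 0 ≤ K := by
  obtain ⟨u, hu⟩ := exists_ne (0 : E)
  exact nonneg_of_mul_nonneg_left ((norm_nonneg _).trans (by simpa using h u 0))
    (norm_pos_iff.2 hu)

theorem norm_image_add_sub_sub_fderiv_le {E F : Type*} [NormedAddCommGroup E] [NormedSpace ℝ E]
    [NormedAddCommGroup F] [NormedSpace ℝ F] {f : E → F} {f' : E → E →L[ℝ] F} {K : ℝ}
    (hf : ∀ x, HasFDerivAt f (f' x) x) (hlip : ∀ u v, ‖f' u - f' v‖ ≤ K * ‖u - v‖) (x v : E) :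
    ‖f (x + v) - f x - f' x v‖ ≤ K / 2 * ‖v‖ ^ 2 := by
  have hderiv : ∀ t : ℝ, HasDerivAt (fun t : ℝ => f (x + t • v) - f x - t • f' x v)
      (f' (x + t • v) v - f' x v) t := by
    intro t
    have hline : HasDerivAt (fun t : ℝ => x + t • v) v t := by
      simpa using ((hasDerivAt_id t).smul_const v).const_add x
    exact ((((hf _).comp_hasDerivAt t hline).sub_const (f x)).sub
      ((hasDerivAt_id t).smul_const (f' x v))).congr_deriv (by simp)
  have hbound : ∀ t ∈ Set.Ico (0 : ℝ) 1, ‖f' (x + t • v) v - f' x v‖ ≤ K * ‖v‖ ^ 2 * t := by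
    intro t ht
    calc ‖f' (x + t • v) v - f' x v‖ = ‖(f' (x + t • v) - f' x) v‖ := rfl
      _ ≤ ‖f' (x + t • v) - f' x‖ * ‖v‖ := ContinuousLinearMap.le_opNorm _ _
      _ ≤ K * ‖x + t • v - x‖ * ‖v‖ := mul_le_mul_of_nonneg_right (hlip _ _) (norm_nonneg v)
      _ = K * ‖v‖ ^ 2 * t := by
        rw [add_sub_cancel_left, norm_smul, Real.norm_of_nonneg ht.1]; ring
  have hB : ∀ t : ℝ, HasDerivAt (fun t : ℝ => K / 2 * ‖v‖ ^ 2 * t ^ 2) (K * ‖v‖ ^ 2 * t) t :=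
    fun t => ((hasDerivAt_pow 2 t).const_mul (K / 2 * ‖v‖ ^ 2)).congr_deriv (by ring)
  simpa using image_norm_le_of_norm_deriv_right_le_deriv_boundary
    (fun t _ => (hderiv t).continuousAt.continuousWithinAt) (fun t _ => (hderiv t).hasDerivWithinAt)
    (by simp) hB hbound (Set.right_mem_Icc.2 zero_le_one)

theorem abs_image_add_sub_sub_inner_gradient_le {E : Type*} [NormedAddCommGroup E]
    [InnerProductSpace ℝ E] [CompleteSpace E] {f : E → ℝ} {K : ℝ} (hf : Differentiable ℝ f)
    (hlip : ∀ u v, ‖gradient f u - gradient f v‖ ≤ K * ‖u - v‖) (x v : E) :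
    |f (x + v) - f x - inner ℝ (gradient f x) v| ≤ K / 2 * ‖v‖ ^ 2 := by
  have hlip' : ∀ u w, ‖InnerProductSpace.toDual ℝ E (gradient f u) -
      InnerProductSpace.toDual ℝ E (gradient f w)‖ ≤ K * ‖u - w‖ := fun u w => by
    rw [← map_sub, LinearIsometryEquiv.norm_map]; exact hlip u w
  simpa using norm_image_add_sub_sub_fderiv_le (fun x => (hf x).hasGradientAt.hasFDerivAt)
    hlip' x v

theorem Real.sign_mul_self (r : ℝ) : Real.sign r * r = |r| := by
  rcases lt_trichotomy r 0 with h | rfl | h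
  · rw [Real.sign_of_neg h, abs_of_neg h]; ring
  · simp
  · rw [Real.sign_of_pos h, abs_of_pos h]; ring

theorem Real.sign_sq_le_one (r : ℝ) : Real.sign r ^ 2 ≤ 1 := by
  rcases Real.sign_apply_eq r with h | h | h <;> norm_num [h]

section SignedGradientStep

variable {ι : Type*}

noncomputable def signVec (g : EuclideanSpace ℝ ι) : EuclideanSpace ℝ ι :=
  (WithLp.equiv 2 (ι → ℝ)).symm fun i => Real.sign (g i)

theorem signVec_apply (g : EuclideanSpace ℝ ι) (i : ι) : signVec g i = Real.sign (g i) := rfl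

variable [Fintype ι]

theorem sum_abs_le_sqrt_card_mul_norm (y : EuclideanSpace ℝ ι) :
    ∑ i, |y i| ≤ √(Fintype.card ι) * ‖y‖ := by
  rw [← Real.sqrt_sq (norm_nonneg y), ← Real.sqrt_mul (Nat.cast_nonneg _),
    Real.le_sqrt (by positivity) (by positivity), EuclideanSpace.norm_sq_eq]
  simpa using sq_sum_le_card_mul_sum_sq (s := univ) (f := fun i => |y i|)

theorem sum_abs_le_sum_abs_add_sqrt_card_mul_norm_sub (a b : EuclideanSpace ℝ ι) :
    ∑ i, |a i| ≤ ∑ i, |b i| + √(Fintype.card ι) * ‖a - b‖ :=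
  calc ∑ i, |a i| ≤ ∑ i, (|b i| + |(a - b) i|) :=
        sum_le_sum fun i _ => by
          simp only [PiLp.sub_apply]; linarith [abs_sub_abs_le_abs_sub (a i) (b i)]
    _ = ∑ i, |b i| + ∑ i, |(a - b) i| := sum_add_distrib
    _ ≤ ∑ i, |b i| + √(Fintype.card ι) * ‖a - b‖ := by
        gcongr; exact sum_abs_le_sqrt_card_mul_norm _

theorem inner_signVec (g : EuclideanSpace ℝ ι) : inner ℝ g (signVec g) = ∑ i, |g i| := by
  simp [PiLp.inner_apply, signVec_apply, Real.sign_mul_self]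

theorem norm_signVec_sq_le (g : EuclideanSpace ℝ ι) : ‖signVec g‖ ^ 2 ≤ Fintype.card ι := by
  rw [EuclideanSpace.norm_sq_eq]
  calc ∑ i, ‖signVec g i‖ ^ 2 ≤ ∑ _i : ι, (1 : ℝ) :=
        sum_le_sum fun i _ => by simpa [signVec_apply] using Real.sign_sq_le_one (g i)
    _ = Fintype.card ι := by simp

theorem abs_image_signed_gradient_step_sub_le {f : EuclideanSpace ℝ ι → ℝ} {K α : ℝ}
    (hf : Differentiable ℝ f) (hlip : ∀ u v, ‖gradient f u - gradient f v‖ ≤ K * ‖u - v‖)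
    (hK : 0 ≤ K) (hα : 0 ≤ α) (x y : EuclideanSpace ℝ ι) :
    |f (x + α • signVec (gradient f x)) - f x| ≤
      α * ∑ i, |gradient f y i| + √(Fintype.card ι) * α * K * ‖x - y‖ +
        K / 2 * α ^ 2 * Fintype.card ι := by
  set v := α • signVec (gradient f x)
  have hinner : inner ℝ (gradient f x) v = α * ∑ i, |gradient f x i| := by
    rw [inner_smul_right, inner_signVec]
  have hnorm : ‖v‖ ^ 2 ≤ α ^ 2 * Fintype.card ι := by
    rw [norm_smul, mul_pow, Real.norm_eq_abs, sq_abs]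
    gcongr
    exact norm_signVec_sq_le _
  have hl1 : ∑ i, |gradient f x i| ≤ ∑ i, |gradient f y i| + √(Fintype.card ι) * (K * ‖x - y‖) :=
    (sum_abs_le_sum_abs_add_sqrt_card_mul_norm_sub _ _).trans (by gcongr; exact hlip x y)
  have hdesc := abs_image_add_sub_sub_inner_gradient_le hf hlip x v
  rw [hinner] at hdesc
  have hlin : 0 ≤ α * ∑ i, |gradient f x i| := by positivity
  calc |f (x + v) - f x| ≤ α * ∑ i, |gradient f x i| + K / 2 * ‖v‖ ^ 2 :=
        abs_le.2 ⟨by linarith [(abs_le.1 hdesc).1], by linarith [(abs_le.1 hdesc).2]⟩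
    _ ≤ α * (∑ i, |gradient f y i| + √(Fintype.card ι) * (K * ‖x - y‖)) +
          K / 2 * (α ^ 2 * Fintype.card ι) := by gcongr
    _ = _ := by ring

end SignedGradientStep

theorem multi_step_attack_change_bound_general {n : ℕ}
    (f : EuclideanSpace ℝ (Fin n) → ℝ) (K α : ℝ) (T : ℕ)
    (hdiff : Differentiable ℝ f) (hα : 0 < α)
    (hlip : ∀ u v : EuclideanSpace ℝ (Fin n),
      ‖gradient f u - gradient f v‖ ≤ K * ‖u - v‖)
    (x₀ x₁ : ℕ → EuclideanSpace ℝ (Fin n))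
    (hx₁ : ∀ t < T, x₁ (t + 1) =
      x₁ t + α • (WithLp.equiv 2 (Fin n → ℝ)).symm (fun i => Real.sign (gradient f (x₁ t) i))) :
    |f (x₁ T) - f (x₁ 0)| ≤
      ∑ t ∈ Finset.range T,
        (α * (∑ i, |gradient f (x₀ t) i|) +
          Real.sqrt n * α * K * ‖x₁ t - x₀ t‖ + K / 2 * α ^ 2 * n) := by
  -- `hlip` forces `0 ≤ K` only on a nontrivial space; for `n = 0` both sides vanish.
  obtain rfl | hn := Nat.eq_zero_or_pos n
  · simp [Subsingleton.elim (x₁ T) (x₁ 0)]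
  have : NeZero n := ⟨hn.ne'⟩
  have hK : 0 ≤ K := nonneg_of_norm_sub_le_mul_norm_sub hlip
  rw [abs_sub_comm, ← Real.dist_eq]
  refine dist_le_range_sum_of_dist_le (f := fun t => f (x₁ t)) T fun {t} ht => ?_
  rw [Real.dist_eq, abs_sub_comm, hx₁ t ht]
  simpa [signVec] using abs_image_signed_gradient_step_sub_le hdiff hlip hK hα.le (x₁ t) (x₀ t)

/-- Multi-step version of Theorem 2 with explicit second-order error terms: the total
change of prediction at `x₁` under a `T`-step signed-gradient attack is bounded via the
gradient ℓ¹-norms along the trajectory of a neighboring point `x₀`. -/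
theorem multi_step_attack_change_bound {n : ℕ}
    (f : EuclideanSpace ℝ (Fin n) → ℝ) (K α : ℝ) (T : ℕ)
    (hdiff : Differentiable ℝ f) (hα : 0 < α)
    (hlip : ∀ u v : EuclideanSpace ℝ (Fin n),
      ‖gradient f u - gradient f v‖ ≤ K * ‖u - v‖)
    (x₀ x₁ : ℕ → EuclideanSpace ℝ (Fin n))
    (hx₀ : ∀ t < T, x₀ (t + 1) =
      x₀ t + α • (WithLp.equiv 2 (Fin n → ℝ)).symm (fun i => Real.sign (gradient f (x₀ t) i)))
    (hx₁ : ∀ t < T, x₁ (t + 1) =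
      x₁ t + α • (WithLp.equiv 2 (Fin n → ℝ)).symm (fun i => Real.sign (gradient f (x₁ t) i))) :
    |f (x₁ T) - f (x₁ 0)| ≤
      ∑ t ∈ Finset.range T,
        (α * (∑ i, |gradient f (x₀ t) i|) +
          Real.sqrt n * α * K * ‖x₁ t - x₀ t‖ + K / 2 * α ^ 2 * n) :=
  multi_step_attack_change_bound_general f K α T hdiff hα hlip x₀ x₁ hx₁
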